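/- Let s be a positive integer, let m be a nonnegative integer, let q be a complex number with |q| < 1, and let b be a complex number such that no factor 1 − b q^i with i ≥ 1 vanishes. For 0 ≤ k ≤ s−1 set j(k) = 0 if k = 0 and j(k) = 1 if 1 ≤ k ≤ s−1. Then Σ_{k=0}^{s−1} Σ_{n=0}^{∞} b^{sn+k} q^{(sn+k)(m+n+j(k))} / ((bq^{m+1}; q)_n (q; q)_{sn+k}) = 1/(bq^{m+1}; q)_∞. -/

import Mathlib

/-- Finite q-Pochhammer symbol `(A; q)_n = ∏_{i=0}^{n-1} (1 - A q^i)`. -/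
noncomputable def qPoch (A q : ℂ) (n : ℕ) : ℂ := ∏ i ∈ Finset.range n, (1 - A * q ^ i)

/-- Infinite q-Pochhammer symbol `(A; q)_∞ = ∏_{i=0}^{∞} (1 - A q^i)`. -/
noncomputable def qPochInf (A q : ℂ) : ℂ := ∏' i : ℕ, (1 - A * q ^ i)

namespace Cor33
open Finset Filter

/- ### basic q-Pochhammer lemmas -/

lemma qPoch_succ (A q : ℂ) (n : ℕ) : qPoch A q (n+1) = qPoch A q n * (1 - A * q ^ n) := by
  simp [qPoch, Finset.prod_range_succ]

lemma qPoch_shift (A q : ℂ) (n : ℕ) :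
    qPoch A q n * (1 - A * q ^ n) = (1 - A) * qPoch (A * q) q n := by
  induction n with
  | zero => simp [qPoch]
  | succ n ih =>
    rw [qPoch_succ, qPoch_succ]
    calc qPoch A q n * (1 - A * q ^ n) * (1 - A * q ^ (n + 1))
        = (1 - A) * qPoch (A*q) q n * (1 - A * q * q ^ n) := by rw [← ih, pow_succ]; ring
      _ = (1 - A) * (qPoch (A*q) q n * (1 - A * q * q ^ n)) := by ring

lemma norm_qPoch (A q : ℂ) (n : ℕ) : ‖qPoch A q n‖ = ∏ i ∈ range n, ‖1 - A * q ^ i‖ := by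
  simp [qPoch, norm_prod]

/- ### lower bounds for partial products -/

lemma one_sub_sum_le_prod' (t : Finset ℕ) (y : ℕ → ℝ) (h0 : ∀ i ∈ t, 0 ≤ y i)
    (h1 : ∀ i ∈ t, y i ≤ 1) : 1 - ∑ i ∈ t, y i ≤ ∏ i ∈ t, (1 - y i) := by
  classical
  induction t using Finset.induction with
  | empty => simp
  | @insert a t' hnotmem ih =>
    rw [Finset.sum_insert hnotmem, Finset.prod_insert hnotmem]
    have ih' := ih (fun i hi => h0 i (Finset.mem_insert_of_mem hi))
      (fun i hi => h1 i (Finset.mem_insert_of_mem hi))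
    have h0a := h0 a (Finset.mem_insert_self a t')
    have h1a := h1 a (Finset.mem_insert_self a t')
    have hsum : 0 ≤ ∑ i ∈ t', y i :=
      Finset.sum_nonneg (fun i hi => h0 i (Finset.mem_insert_of_mem hi))
    have hprod : (0:ℝ) ≤ ∏ i ∈ t', (1 - y i) :=
      Finset.prod_nonneg (fun i hi => by
        have := h1 i (Finset.mem_insert_of_mem hi); linarith)
    nlinarith [ih']

lemma prod_lower (x : ℕ → ℂ) (hx : ∀ l, 1 - x l ≠ 0) (hsx : Summable fun l => ‖x l‖) :
    ∃ δ : ℝ, 0 < δ ∧ ∀ j n : ℕ, δ ≤ ∏ i ∈ Finset.range n, ‖1 - x (j + i)‖ := by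
  classical
  have h0 : Filter.Tendsto (fun L => ∑' k, ‖x (k + L)‖) Filter.atTop (nhds 0) :=
    tendsto_sum_nat_add (fun l => ‖x l‖)
  obtain ⟨L, hL⟩ := (h0.eventually_le_const (show (0:ℝ) < 1/2 by norm_num)).exists
  set h : ℕ → ℝ := fun l => min 1 ‖1 - x l‖ with hh
  have hhpos : ∀ l, 0 < h l := fun l => lt_min one_pos (norm_pos_iff.mpr (hx l))
  have hhle1 : ∀ l, h l ≤ 1 := fun l => min_le_left _ _
  have hhleN : ∀ l, h l ≤ ‖1 - x l‖ := fun l => min_le_right _ _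
  have hsummL : Summable (fun d => ‖x (d + L)‖) := (summable_nat_add_iff L).mpr hsx
  have hxle : ∀ l, L ≤ l → ‖x l‖ ≤ 1/2 := by
    intro l hl
    obtain ⟨d, rfl⟩ := Nat.exists_eq_add_of_le hl
    have h1 : ‖x (d + L)‖ ≤ ∑' k, ‖x (k + L)‖ :=
      Summable.le_tsum hsummL d (fun j _ => norm_nonneg _)
    have h2 : x (L + d) = x (d + L) := by rw [Nat.add_comm]
    rw [h2]; exact le_trans h1 hL
  have hone_sub : ∀ l, 1 - ‖x l‖ ≤ h l := by
    intro l
    apply le_min (by linarith [norm_nonneg (x l)])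
    calc 1 - ‖x l‖ = ‖(1:ℂ)‖ - ‖x l‖ := by simp
      _ ≤ ‖1 - x l‖ := norm_sub_norm_le _ _
  refine ⟨(∏ l ∈ range L, h l) * (1/2),
    by { apply mul_pos (Finset.prod_pos (fun i _ => hhpos i)); norm_num }, ?_⟩
  intro j n
  have step1 : ∏ i ∈ range n, h (j + i) ≤ ∏ i ∈ range n, ‖1 - x (j + i)‖ :=
    Finset.prod_le_prod (fun i _ => (hhpos _).le) (fun i _ => hhleN _)
  refine le_trans ?_ step1
  set S : Finset ℕ := (range n).image (j + ·) with hS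
  have himg : ∏ l ∈ S, h l = ∏ i ∈ range n, h (j + i) :=
    Finset.prod_image (fun a _ b _ hab => by omega)
  rw [← himg]
  set T : Finset ℕ := S ∪ range L with hT
  have hsub : S ⊆ T := Finset.subset_union_left
  have hsubR : range L ⊆ T := Finset.subset_union_right
  have hTS : (∏ l ∈ T \ S, h l) * ∏ l ∈ S, h l = ∏ l ∈ T, h l := Finset.prod_sdiff hsub
  have hTR : (∏ l ∈ T \ range L, h l) * ∏ l ∈ range L, h l = ∏ l ∈ T, h l :=
    Finset.prod_sdiff hsubR
  have hTleS : ∏ l ∈ T, h l ≤ ∏ l ∈ S, h l := by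
    rw [← hTS]
    have h1 : ∏ l ∈ T \ S, h l ≤ 1 :=
      Finset.prod_le_one (fun i _ => (hhpos _).le) (fun i _ => hhle1 _)
    have h2 : 0 ≤ ∏ l ∈ S, h l := Finset.prod_nonneg (fun i _ => (hhpos _).le)
    nlinarith
  refine le_trans ?_ hTleS
  rw [← hTR]
  have hmem : ∀ l ∈ T \ range L, L ≤ l := by
    intro l hl
    have h2 := (Finset.mem_sdiff.mp hl).2
    simp only [Finset.mem_range] at h2
    omega
  have hbig : (1:ℝ)/2 ≤ ∏ l ∈ T \ range L, h l := by
    have hstep : ∏ l ∈ T \ range L, (1 - ‖x l‖) ≤ ∏ l ∈ T \ range L, h l :=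
      Finset.prod_le_prod (fun l hl => by linarith [hxle l (hmem l hl)])
        (fun l hl => hone_sub l)
    refine le_trans ?_ hstep
    have hsum_le : ∑ l ∈ T \ range L, ‖x l‖ ≤ 1/2 := by
      set F := T \ range L with hF
      have hmap : ∑ d ∈ F.image (fun l => l - L), ‖x (d + L)‖ = ∑ l ∈ F, ‖x l‖ := by
        rw [Finset.sum_image (fun a ha b hb hab => by
          have := hmem a ha; have := hmem b hb; omega)]
        apply Finset.sum_congr rfl
        intro l hl
        have h3 : l - L + L = l := by have := hmem l hl; omega
        rw [h3]
      rw [← hmap]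
      refine le_trans (Summable.sum_le_tsum _ (fun i _ => norm_nonneg _) hsummL) hL
    have := one_sub_sum_le_prod' (T \ range L) (fun l => ‖x l‖)
      (fun i _ => norm_nonneg _) (fun i hi => by linarith [hxle i (hmem i hi)])
    linarith
  have hR0 : 0 ≤ ∏ l ∈ range L, h l := Finset.prod_nonneg (fun i _ => (hhpos _).le)
  have hTnn : 0 ≤ ∏ l ∈ T \ range L, h l := Finset.prod_nonneg (fun i _ => (hhpos _).le)
  nlinarith [hbig, hR0]

/- ### the single-index term and its companions -/

/-- ceiling `⌈N/s⌉` expressed via floor division. -/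
def cc (s N : ℕ) : ℕ := N / s + (if N % s = 0 then 0 else 1)

noncomputable def trm (s m : ℕ) (q b : ℂ) (N : ℕ) : ℂ :=
  b ^ N * q ^ (N * (m + cc s N)) / (qPoch (b * q ^ (m + 1)) q (N / s) * qPoch q q N)

noncomputable def Xf (s m : ℕ) (q b : ℂ) (N : ℕ) : ℂ :=
  b ^ N * q ^ (N * (m + cc s N)) / (qPoch (b * q ^ (m + 2)) q (N / s) * qPoch q q N)

noncomputable def Rf (s m : ℕ) (q b : ℂ) (N : ℕ) : ℂ :=
  b ^ (N+1) * q ^ (N * (m + cc s N) + (m + 1 + N / s)) /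
    (qPoch (b * q ^ (m + 2)) q (N / s) * qPoch q q N)

noncomputable def Ef (s m : ℕ) (q b : ℂ) (N : ℕ) : ℂ :=
  (if N % s = 0 then (1:ℂ) else 0) *
    (b ^ (N+1) * q ^ ((N+1) * (m + N / s) + 1) * (1 - q ^ N)) /
    (qPoch (b * q ^ (m + 2)) q (N / s) * qPoch q q N)

section
variable {s m : ℕ} {q b : ℂ}

lemma qq_ne_zero (hq1 : ‖q‖ < 1) (N : ℕ) : qPoch q q N ≠ 0 := by
  rw [qPoch]
  apply Finset.prod_ne_zero_iff.mpr
  intro i _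
  have h5 : ‖q * q ^ i‖ < 1 := by
    rw [norm_mul, norm_pow]
    calc ‖q‖ * ‖q‖ ^ i ≤ ‖q‖ * 1 := by
          apply mul_le_mul_of_nonneg_left _ (norm_nonneg q)
          exact pow_le_one₀ (norm_nonneg q) hq1.le
      _ = ‖q‖ := mul_one _
      _ < 1 := hq1
  intro h
  rw [sub_eq_zero] at h
  rw [← h] at h5
  simp at h5

lemma one_sub_pow_ne_zero (hq1 : ‖q‖ < 1) (N : ℕ) (hN : 1 ≤ N) : (1:ℂ) - q ^ N ≠ 0 := by
  intro h
  rw [sub_eq_zero] at h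
  have h5 : ‖q ^ N‖ < 1 := by
    rw [norm_pow]
    calc ‖q‖ ^ N ≤ ‖q‖ ^ 1 := pow_le_pow_of_le_one (norm_nonneg q) hq1.le hN
      _ = ‖q‖ := pow_one _
      _ < 1 := hq1
  rw [← h] at h5
  simp at h5

lemma pochb_ne_zero (hb : ∀ i : ℕ, 1 - b * q ^ (i + 1) ≠ 0) (j n : ℕ) :
    qPoch (b * q ^ (j + 1)) q n ≠ 0 := by
  rw [qPoch]
  apply Finset.prod_ne_zero_iff.mpr
  intro i _
  have h : b * q ^ (j + 1) * q ^ i = b * q ^ ((j + i) + 1) := by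
    rw [mul_assoc, ← pow_add]
    congr 2
    omega
  rw [h]
  exact hb (j + i)

/- ### termwise identities -/

lemma T1 (hq1 : ‖q‖ < 1) (hb : ∀ i : ℕ, 1 - b * q ^ (i + 1) ≠ 0) (N : ℕ) :
    (1 - b * q ^ (m + 1)) * trm s m q b N = Xf s m q b N - Rf s m q b N := by
  have h := qPoch_shift (b * q ^ (m+1)) q (N / s)
  have harg : b * q ^ (m + 1) * q = b * q ^ (m + 2) := by rw [mul_assoc, ← pow_succ]
  rw [harg] at h
  have h1 : qPoch (b * q ^ (m+1)) q (N / s) ≠ 0 := pochb_ne_zero hb m _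
  have h2 : qPoch (b * q ^ (m+2)) q (N / s) ≠ 0 := pochb_ne_zero hb (m+1) _
  have h3 : qPoch q q N ≠ 0 := qq_ne_zero hq1 N
  rw [trm, Xf, Rf]
  field_simp
  linear_combination (-(b ^ N * q ^ (N * (m + cc s N)))) * h

lemma T4 (N : ℕ) : q ^ N * Xf s m q b N = trm s (m+1) q b N := by
  rw [Xf, trm, show m+1+1 = m+2 from rfl, mul_div_assoc']
  congr 1
  ring

lemma T2 (hs : 0 < s) (hq1 : ‖q‖ < 1) (hb : ∀ i : ℕ, 1 - b * q ^ (i + 1) ≠ 0) (N : ℕ) :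
    (1 - q ^ (N+1)) * Xf s m q b (N+1) - Rf s m q b N = Ef s m q b (N+1) - Ef s m q b N := by
  set n := N / s with hn
  set k := N % s with hk
  have hks : k < s := Nat.mod_lt _ hs
  have hN : s * n + k = N := Nat.div_add_mod N s
  have hqqN : qPoch q q N ≠ 0 := qq_ne_zero hq1 N
  have hqq1 : (1:ℂ) - q ^ (N+1) ≠ 0 := one_sub_pow_ne_zero hq1 (N+1) (by omega)
  have hP2n : qPoch (b * q ^ (m + 2)) q n ≠ 0 := pochb_ne_zero hb (m+1) n
  have hqqsucc : qPoch q q (N+1) = qPoch q q N * (1 - q ^ (N+1)) := by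
    rw [qPoch_succ, ← pow_succ']
  rcases Nat.lt_or_ge (k+1) s with hlt | hge
  · have hN1 : N + 1 = s * n + (k+1) := by omega
    have hdiv1 : (N+1)/s = n := by
      rw [hN1, Nat.mul_add_div hs, Nat.div_eq_of_lt hlt, add_zero]
    have hmod1 : (N+1) % s = k+1 := by
      rw [hN1, Nat.mul_add_mod, Nat.mod_eq_of_lt hlt]
    by_cases hk0 : k = 0
    · have hccN : cc s N = n := by simp [cc, ← hk, hk0, ← hn]
      have hccN1 : cc s (N+1) = n + 1 := by simp [cc, hdiv1, hmod1]
      rw [Xf, Rf, Ef, Ef, hccN, hccN1, hdiv1, hmod1, hqqsucc, ← hn, ← hk, hk0]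
      simp only [if_neg (by omega : ¬ (0+1 = 0)), if_pos rfl]
      field_simp
      simp only [if_true]
      ring
    · have hccN : cc s N = n + 1 := by simp [cc, ← hk, hk0, ← hn]
      have hccN1 : cc s (N+1) = n + 1 := by simp [cc, hdiv1, hmod1]
      rw [Xf, Rf, Ef, Ef, hccN, hccN1, hdiv1, hmod1, ← hn, ← hk, hqqsucc]
      simp only [if_neg (by omega : ¬ (k+1 = 0)), if_neg hk0]
      field_simp
      ring
  · have hksucc : k + 1 = s := by omega
    have hN1 : N + 1 = s * (n+1) := by rw [Nat.mul_succ]; omega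
    have hdiv1 : (N+1)/s = n+1 := by rw [hN1, Nat.mul_div_cancel_left _ hs]
    have hmod1 : (N+1) % s = 0 := by rw [hN1]; exact Nat.mul_mod_right s (n+1)
    have hP2n1 : qPoch (b * q ^ (m + 2)) q (n+1) ≠ 0 := pochb_ne_zero hb (m+1) (n+1)
    have hP2succ : qPoch (b * q ^ (m+2)) q (n+1)
        = qPoch (b * q ^ (m+2)) q n * (1 - b * q ^ (m+2) * q ^ n) := qPoch_succ _ _ _
    have hfacarg : b * q ^ (m+2) * q ^ n = b * q ^ ((m+1+n)+1) := by
      rw [mul_assoc, ← pow_add, show m+2+n = (m+1+n)+1 by omega]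
    have hfac : (1:ℂ) - b * q ^ (m+2) * q ^ n ≠ 0 := by rw [hfacarg]; exact hb (m+1+n)
    by_cases hk0 : k = 0
    · have hccN : cc s N = n := by simp [cc, ← hk, hk0, ← hn]
      have hccN1 : cc s (N+1) = n + 1 := by simp [cc, hdiv1, hmod1]
      rw [Xf, Rf, Ef, Ef, hccN, hccN1, hdiv1, hmod1, ← hn, ← hk, hk0, hqqsucc, hP2succ]
      simp only [if_pos rfl]
      field_simp
      simp only [if_true]
      ring
    · have hccN : cc s N = n + 1 := by simp [cc, ← hk, hk0, ← hn]
      have hccN1 : cc s (N+1) = n + 1 := by simp [cc, hdiv1, hmod1]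
      rw [Xf, Rf, Ef, Ef, hccN, hccN1, hdiv1, hmod1, ← hn, ← hk, hqqsucc, hP2succ]
      simp only [if_pos rfl, if_neg hk0]
      field_simp
      simp only [if_true]
      ring

/- ### norm estimates -/

lemma core_bound (hq1 : ‖q‖ < 1) {δ : ℝ} (hδ : 0 < δ) {d : ℂ} (hd : δ ≤ ‖d‖)
    {e1 e2 N j : ℕ} (he1 : e1 ≤ N + 3) (he2 : j + N * (N / s) ≤ e2) :
    ‖b ^ e1 * q ^ e2 / d‖ ≤ (1 + ‖b‖) ^ (N + 3) * (‖q‖ ^ j * ‖q‖ ^ (N * (N / s))) / δ := by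
  rw [norm_div, norm_mul, norm_pow, norm_pow]
  have h1 : ‖b‖ ^ e1 ≤ (1 + ‖b‖) ^ (N + 3) := by
    calc ‖b‖ ^ e1 ≤ (1 + ‖b‖) ^ e1 :=
          pow_le_pow_left₀ (norm_nonneg b) (by linarith) e1
      _ ≤ (1 + ‖b‖) ^ (N + 3) :=
          pow_le_pow_right₀ (by linarith [norm_nonneg b]) he1
  have h2 : ‖q‖ ^ e2 ≤ ‖q‖ ^ j * ‖q‖ ^ (N * (N / s)) := by
    rw [← pow_add]
    exact pow_le_pow_of_le_one (norm_nonneg q) hq1.le he2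
  apply div_le_div₀ (by positivity) _ hδ hd
  exact mul_le_mul h1 h2 (by positivity) (by positivity)

lemma term_bound (hq1 : ‖q‖ < 1) {δ : ℝ} (hδ : 0 < δ) {d c : ℂ} (hd : δ ≤ ‖d‖) (hc : ‖c‖ ≤ 2)
    {e1 e2 N j : ℕ} (he1 : e1 ≤ N + 3) (he2 : j + N * (N / s) ≤ e2) :
    ‖c * (b ^ e1 * q ^ e2 / d)‖
      ≤ ‖q‖ ^ j * (2 * (1 + ‖b‖) ^ (N + 3) * ‖q‖ ^ (N * (N / s)) / δ) := by
  rw [norm_mul]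
  have h := core_bound (s := s) (b := b) hq1 hδ hd he1 he2
  calc ‖c‖ * ‖b ^ e1 * q ^ e2 / d‖
      ≤ 2 * ((1 + ‖b‖) ^ (N + 3) * (‖q‖ ^ j * ‖q‖ ^ (N * (N / s))) / δ) :=
        mul_le_mul hc h (norm_nonneg _) (by norm_num)
    _ = ‖q‖ ^ j * (2 * (1 + ‖b‖) ^ (N + 3) * ‖q‖ ^ (N * (N / s)) / δ) := by ring

lemma master_summable (hq1 : ‖q‖ < 1) (hs : 0 < s) {δ : ℝ} (hδ : 0 < δ) :
    Summable (fun N : ℕ => 2 * (1 + ‖b‖) ^ (N + 3) * ‖q‖ ^ (N * (N / s)) / δ) := by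
  set Kb := 1 + ‖b‖ with hKb
  have hKb1 : (1:ℝ) ≤ Kb := by rw [hKb]; linarith [norm_nonneg b]
  have htend : Tendsto (fun D : ℕ => Kb * ‖q‖ ^ D) atTop (nhds 0) := by
    have := tendsto_pow_atTop_nhds_zero_of_lt_one (norm_nonneg q) hq1
    simpa using this.const_mul Kb
  obtain ⟨D, hD⟩ := (htend.eventually_le_const (show (0:ℝ) < 1/2 by norm_num)).exists
  apply Summable.of_norm_bounded_eventually (g := fun N => (2 * Kb ^ 3 / δ) * (1/2) ^ N)
    ((summable_geometric_two).mul_left _)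
  rw [Nat.cofinite_eq_atTop, eventually_atTop]
  refine ⟨s * D, fun N hN => ?_⟩
  have hDiv : D ≤ N / s := (Nat.le_div_iff_mul_le hs).mpr (by rw [Nat.mul_comm]; exact hN)
  have hq0 : (0:ℝ) ≤ ‖q‖ := norm_nonneg q
  have hKb0 : (0:ℝ) < Kb := by linarith
  have hbound : ‖q‖ ^ (N * (N / s)) ≤ (‖q‖ ^ D) ^ N := by
    rw [← pow_mul]
    exact pow_le_pow_of_le_one hq0 hq1.le (by
      calc D * N = N * D := Nat.mul_comm _ _
        _ ≤ N * (N / s) := Nat.mul_le_mul_left N hDiv)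
  have key : 2 * Kb ^ (N + 3) * ‖q‖ ^ (N * (N / s)) / δ ≤ (2 * Kb ^ 3 / δ) * (1/2) ^ N := by
    have h1 : Kb ^ (N+3) = Kb ^ N * Kb ^ 3 := by rw [← pow_add]
    have h2 : Kb ^ N * (‖q‖ ^ D) ^ N = (Kb * ‖q‖ ^ D) ^ N := (mul_pow _ _ _).symm
    have h3 : (Kb * ‖q‖ ^ D) ^ N ≤ (1/2) ^ N :=
      pow_le_pow_left₀ (by positivity) hD N
    calc 2 * Kb ^ (N + 3) * ‖q‖ ^ (N * (N / s)) / δ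
        ≤ 2 * Kb ^ (N + 3) * (‖q‖ ^ D) ^ N / δ := by gcongr
      _ = (2 * Kb ^ 3 / δ) * (Kb ^ N * (‖q‖ ^ D) ^ N) := by rw [h1]; ring
      _ = (2 * Kb ^ 3 / δ) * (Kb * ‖q‖ ^ D) ^ N := by rw [h2]
      _ ≤ (2 * Kb ^ 3 / δ) * (1/2) ^ N := by
          apply mul_le_mul_of_nonneg_left h3 (by positivity)
  have hnn : (0:ℝ) ≤ 2 * Kb ^ (N + 3) * ‖q‖ ^ (N * (N / s)) / δ := by positivity
  calc ‖2 * Kb ^ (N + 3) * ‖q‖ ^ (N * (N / s)) / δ‖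
      = 2 * Kb ^ (N + 3) * ‖q‖ ^ (N * (N / s)) / δ := by rw [Real.norm_of_nonneg hnn]
    _ ≤ _ := key

lemma cc_ge (s N : ℕ) : N / s ≤ cc s N := by unfold cc; split <;> omega

end

/- ### denominator lower bounds -/

lemma exists_denom_lower {q b : ℂ} (hq1 : ‖q‖ < 1)
    (hb : ∀ i : ℕ, 1 - b * q ^ (i + 1) ≠ 0) (m : ℕ) :
    ∃ δ : ℝ, 0 < δ ∧ ∀ (j' nn NN : ℕ),
      δ ≤ ‖qPoch (b * q ^ (m + 1 + j')) q nn * qPoch q q NN‖ := by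
  obtain ⟨δq, hδq0, hδqle⟩ := prod_lower (fun l => q ^ (l+1))
    (fun l => one_sub_pow_ne_zero hq1 (l+1) (by omega))
    (by
      apply Summable.congr (((summable_geometric_of_lt_one (norm_nonneg q) hq1)).mul_left ‖q‖)
      intro l
      rw [norm_pow, pow_succ'])
  obtain ⟨δb, hδb0, hδble⟩ := prod_lower (fun l => b * q ^ (m+1+l))
    (fun l => by
      show (1:ℂ) - b * q ^ (m+1+l) ≠ 0
      rw [show m+1+l = (m+l)+1 by omega]
      exact hb (m+l))
    (by
      apply Summable.congr (((summable_geometric_of_lt_one (norm_nonneg q) hq1)).mul_left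
        (‖b‖ * ‖q‖ ^ (m+1)))
      intro l
      show ‖b‖ * ‖q‖ ^ (m+1) * ‖q‖ ^ l = ‖b * q ^ (m+1+l)‖
      rw [norm_mul, norm_pow, pow_add]
      ring)
  have hqqlow : ∀ N, δq ≤ ‖qPoch q q N‖ := by
    intro N
    rw [norm_qPoch]
    calc δq ≤ ∏ i ∈ range N, ‖1 - q ^ ((0 + i)+1)‖ := hδqle 0 N
      _ = ∏ i ∈ range N, ‖1 - q * q ^ i‖ := by
          apply Finset.prod_congr rfl
          intro i _
          rw [show (0+i)+1 = i+1 by omega, pow_succ']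
  have hPlow : ∀ j' n, δb ≤ ‖qPoch (b * q ^ (m+1+j')) q n‖ := by
    intro j' n
    rw [norm_qPoch]
    calc δb ≤ ∏ i ∈ range n, ‖1 - b * q ^ (m+1+(j'+i))‖ := hδble j' n
      _ = ∏ i ∈ range n, ‖1 - b * q ^ (m+1+j') * q ^ i‖ := by
          apply Finset.prod_congr rfl
          intro i _
          rw [mul_assoc, ← pow_add, show m+1+j'+i = m+1+(j'+i) by omega]
  refine ⟨δb * δq, mul_pos hδb0 hδq0, fun j' nn NN => ?_⟩
  rw [norm_mul]
  exact mul_le_mul (hPlow j' nn) (hqqlow NN) hδq0.le (norm_nonneg _)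

lemma norm_one_sub_pow_le {q : ℂ} (hq1 : ‖q‖ < 1) (N : ℕ) : ‖(1:ℂ) - q ^ N‖ ≤ 2 := by
  calc ‖(1:ℂ) - q ^ N‖ ≤ ‖(1:ℂ)‖ + ‖q ^ N‖ := norm_sub_le _ _
    _ ≤ 1 + 1 := by
        rw [norm_one, norm_pow]
        have := pow_le_one₀ (norm_nonneg q) hq1.le (n := N)
        linarith
    _ = 2 := by norm_num

section
variable {s m : ℕ} {q b : ℂ}

lemma bnd_trm (hq1 : ‖q‖ < 1) {δ : ℝ} (hδ : 0 < δ)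
    (hD : ∀ (j' nn NN : ℕ), δ ≤ ‖qPoch (b * q ^ (m + 1 + j')) q nn * qPoch q q NN‖)
    (j N : ℕ) (hN : j = 0 ∨ 1 ≤ N) :
    ‖trm s (m+j) q b N‖
      ≤ ‖q‖ ^ j * (2 * (1 + ‖b‖) ^ (N + 3) * ‖q‖ ^ (N * (N / s)) / δ) := by
  have hsh : trm s (m+j) q b N
      = 1 * (b ^ N * q ^ (N * (m + j + cc s N)) /
        (qPoch (b * q ^ (m + 1 + j)) q (N / s) * qPoch q q N)) := by
    rw [trm, one_mul, show m + j + 1 = m + 1 + j by omega]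
  rw [hsh]
  have he2 : j + N * (N / s) ≤ N * (m + j + cc s N) := by
    have h1 : N * (N / s) ≤ N * (m + cc s N) :=
      Nat.mul_le_mul_left N (by have := cc_ge s N; omega)
    have h2 : N * (m + j + cc s N) = N * j + N * (m + cc s N) := by ring
    rcases hN with rfl | hN1
    · omega
    · have hj : j ≤ N * j := Nat.le_mul_of_pos_left j hN1
      omega
  exact term_bound (s := s) (b := b) (j := j) hq1 hδ (hD j (N/s) N) (c := (1:ℂ)) (by norm_num)
    (e1 := N) (e2 := N * (m + j + cc s N)) (by omega) he2

lemma bnd_Xf (hq1 : ‖q‖ < 1) {δ : ℝ} (hδ : 0 < δ)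
    (hD : ∀ (j' nn NN : ℕ), δ ≤ ‖qPoch (b * q ^ (m + 1 + j')) q nn * qPoch q q NN‖)
    (N : ℕ) :
    ‖Xf s m q b N‖ ≤ 2 * (1 + ‖b‖) ^ (N + 3) * ‖q‖ ^ (N * (N / s)) / δ := by
  have hsh : Xf s m q b N
      = 1 * (b ^ N * q ^ (N * (m + cc s N)) /
        (qPoch (b * q ^ (m + 1 + 1)) q (N / s) * qPoch q q N)) := by
    rw [Xf, one_mul]
  rw [hsh]
  have he2 : 0 + N * (N / s) ≤ N * (m + cc s N) := by
    have := Nat.mul_le_mul_left N (by have := cc_ge s N; omega : N / s ≤ m + cc s N)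
    omega
  have := term_bound (s := s) (b := b) (j := 0) hq1 hδ (hD 1 (N/s) N) (c := (1:ℂ)) (by norm_num)
    (e1 := N) (e2 := N * (m + cc s N)) (by omega) he2
  simpa using this

lemma bnd_Rf (hq1 : ‖q‖ < 1) {δ : ℝ} (hδ : 0 < δ)
    (hD : ∀ (j' nn NN : ℕ), δ ≤ ‖qPoch (b * q ^ (m + 1 + j')) q nn * qPoch q q NN‖)
    (N : ℕ) :
    ‖Rf s m q b N‖ ≤ 2 * (1 + ‖b‖) ^ (N + 3) * ‖q‖ ^ (N * (N / s)) / δ := by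
  have hsh : Rf s m q b N
      = 1 * (b ^ (N+1) * q ^ (N * (m + cc s N) + (m + 1 + N / s)) /
        (qPoch (b * q ^ (m + 1 + 1)) q (N / s) * qPoch q q N)) := by
    rw [Rf, one_mul]
  rw [hsh]
  have he2 : 0 + N * (N / s) ≤ N * (m + cc s N) + (m + 1 + N / s) := by
    have h9 := Nat.mul_le_mul_left N (by have := cc_ge s N; omega : N / s ≤ m + cc s N)
    simpa using le_trans h9 (Nat.le_add_right _ _)
  have := term_bound (s := s) (b := b) (j := 0) hq1 hδ (hD 1 (N/s) N) (c := (1:ℂ)) (by norm_num)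
    (e1 := N+1) (e2 := N * (m + cc s N) + (m + 1 + N / s)) (by omega) he2
  simpa using this

lemma bnd_Yf (hq1 : ‖q‖ < 1) {δ : ℝ} (hδ : 0 < δ)
    (hD : ∀ (j' nn NN : ℕ), δ ≤ ‖qPoch (b * q ^ (m + 1 + j')) q nn * qPoch q q NN‖)
    (N : ℕ) :
    ‖(1 - q ^ N) * Xf s m q b N‖
      ≤ 2 * (1 + ‖b‖) ^ (N + 3) * ‖q‖ ^ (N * (N / s)) / δ := by
  have hsh : (1 - q ^ N) * Xf s m q b N
      = (1 - q ^ N) * (b ^ N * q ^ (N * (m + cc s N)) /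
        (qPoch (b * q ^ (m + 1 + 1)) q (N / s) * qPoch q q N)) := by
    rw [Xf]
  rw [hsh]
  have he2 : 0 + N * (N / s) ≤ N * (m + cc s N) := by
    have := Nat.mul_le_mul_left N (by have := cc_ge s N; omega : N / s ≤ m + cc s N)
    omega
  have := term_bound (s := s) (b := b) (j := 0) hq1 hδ (hD 1 (N/s) N)
    (norm_one_sub_pow_le hq1 N)
    (e1 := N) (e2 := N * (m + cc s N)) (by omega) he2
  simpa using this

lemma bnd_Ef (hq1 : ‖q‖ < 1) {δ : ℝ} (hδ : 0 < δ)
    (hD : ∀ (j' nn NN : ℕ), δ ≤ ‖qPoch (b * q ^ (m + 1 + j')) q nn * qPoch q q NN‖)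
    (N : ℕ) :
    ‖Ef s m q b N‖ ≤ 2 * (1 + ‖b‖) ^ (N + 3) * ‖q‖ ^ (N * (N / s)) / δ := by
  by_cases hcase : N % s = 0
  · have hsh : Ef s m q b N
        = (1 - q ^ N) * (b ^ (N+1) * q ^ ((N+1) * (m + N / s) + 1) /
          (qPoch (b * q ^ (m + 1 + 1)) q (N / s) * qPoch q q N)) := by
      rw [Ef, if_pos hcase]
      ring
    rw [hsh]
    have he2 : 0 + N * (N / s) ≤ (N+1) * (m + N / s) + 1 := by
      have h2 : N * (N/s) ≤ (N+1) * (m + N/s) :=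
        Nat.mul_le_mul (by omega) (by omega)
      omega
    have := term_bound (s := s) (b := b) (j := 0) hq1 hδ (hD 1 (N/s) N)
      (norm_one_sub_pow_le hq1 N)
      (e1 := N+1) (e2 := (N+1) * (m + N / s) + 1) (by omega) he2
    simpa using this
  · rw [Ef, if_neg hcase]
    simp only [zero_mul, zero_div, norm_zero]
    positivity

/- ### the recursion step -/

set_option maxHeartbeats 1000000 in
lemma step (hs : 0 < s) (hq1 : ‖q‖ < 1) (hb : ∀ i : ℕ, 1 - b * q ^ (i + 1) ≠ 0) (m : ℕ) :
    (1 - b * q ^ (m+1)) * ∑' N, trm s m q b N = ∑' N, trm s (m+1) q b N := by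
  obtain ⟨δ, hδ0, hD⟩ := exists_denom_lower hq1 hb m
  have hBsum : Summable (fun N : ℕ => 2 * (1 + ‖b‖) ^ (N + 3) * ‖q‖ ^ (N * (N / s)) / δ) :=
    master_summable hq1 hs hδ0
  have hXs : Summable (Xf s m q b) :=
    hBsum.of_norm_bounded (bnd_Xf hq1 hδ0 hD)
  have hRs : Summable (Rf s m q b) :=
    hBsum.of_norm_bounded (bnd_Rf hq1 hδ0 hD)
  have hEs : Summable (Ef s m q b) :=
    hBsum.of_norm_bounded (bnd_Ef hq1 hδ0 hD)
  have hYs : Summable (fun N => (1 - q ^ N) * Xf s m q b N) :=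
    hBsum.of_norm_bounded (bnd_Yf hq1 hδ0 hD)
  have hE1s : Summable (fun N => Ef s m q b (N+1)) := (summable_nat_add_iff 1).mpr hEs
  have hLs : Summable (fun N => (1 - q ^ (N+1)) * Xf s m q b (N+1)) :=
    (summable_nat_add_iff 1).mpr hYs
  have hE0 : Ef s m q b 0 = 0 := by simp [Ef]
  have hRL : ∑' N, Rf s m q b N = ∑' N, (1 - q ^ (N+1)) * Xf s m q b (N+1) := by
    have h1 : ∑' N, ((1 - q ^ (N+1)) * Xf s m q b (N+1) - Rf s m q b N)
        = ∑' N, (Ef s m q b (N+1) - Ef s m q b N) :=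
      tsum_congr (fun N => T2 hs hq1 hb N)
    rw [Summable.tsum_sub hLs hRs, Summable.tsum_sub hE1s hEs] at h1
    have h2 : ∑' N, Ef s m q b N = ∑' N, Ef s m q b (N+1) := by
      rw [Summable.tsum_eq_zero_add hEs, hE0, zero_add]
    rw [← h2, sub_self] at h1
    exact (sub_eq_zero.mp h1).symm
  have hLY : ∑' N, (1 - q ^ (N+1)) * Xf s m q b (N+1)
      = ∑' N, (1 - q ^ N) * Xf s m q b N := by
    rw [Summable.tsum_eq_zero_add hYs]
    simp
  calc (1 - b * q ^ (m+1)) * ∑' N, trm s m q b N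
      = ∑' N, (1 - b * q ^ (m+1)) * trm s m q b N := by rw [tsum_mul_left]
    _ = ∑' N, (Xf s m q b N - Rf s m q b N) := tsum_congr (fun N => T1 hq1 hb N)
    _ = (∑' N, Xf s m q b N) - ∑' N, Rf s m q b N := Summable.tsum_sub hXs hRs
    _ = (∑' N, Xf s m q b N) - ∑' N, (1 - q ^ N) * Xf s m q b N := by rw [hRL, hLY]
    _ = ∑' N, (Xf s m q b N - (1 - q ^ N) * Xf s m q b N) := (Summable.tsum_sub hXs hYs).symm
    _ = ∑' N, q ^ N * Xf s m q b N := tsum_congr (fun N => by ring)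
    _ = ∑' N, trm s (m+1) q b N := tsum_congr (fun N => T4 N)


/- ### reindexing -/

lemma reindex_term (hs : 0 < s) {k : ℕ} (hk : k < s) (n : ℕ) :
    trm s m q b (n * s + k)
      = b ^ (s * n + k) * q ^ ((s * n + k) * (m + n + if k = 0 then 0 else 1)) /
        (qPoch (b * q ^ (m + 1)) q n * qPoch q q (s * n + k)) := by
  have h1 : n * s + k = s * n + k := by ring
  have hdiv : (s * n + k) / s = n := by
    rw [Nat.mul_add_div hs, Nat.div_eq_of_lt hk, add_zero]
  have hmod : (s * n + k) % s = k := by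
    rw [Nat.mul_add_mod, Nat.mod_eq_of_lt hk]
  rw [h1, trm, cc, hdiv, hmod, ← Nat.add_assoc]

end
end Cor33

open Cor33 Filter in
set_option maxHeartbeats 2000000 in
/-- Corollary 3.3. -/
theorem corollary_three_three (s : ℕ) (hs : 0 < s) (m : ℕ) (q b : ℂ)
    (hq1 : ‖q‖ < 1) (hb : ∀ i : ℕ, 1 - b * q ^ (i + 1) ≠ 0) :
    ∑ k ∈ Finset.range s, ∑' n : ℕ,
        b ^ (s * n + k) * q ^ ((s * n + k) * (m + n + if k = 0 then 0 else 1)) /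
          (qPoch (b * q ^ (m + 1)) q n * qPoch q q (s * n + k))
    = 1 / qPochInf (b * q ^ (m + 1)) q := by
  have hq1' : ‖q‖ < 1 := by exact hq1
  clear hq1
  -- uniform bounds
  obtain ⟨δ, hδ0, hD⟩ := exists_denom_lower hq1' hb m
  have hB : Summable (fun N : ℕ => 2 * (1 + ‖b‖) ^ (N + 3) * ‖q‖ ^ (N * (N / s)) / δ) :=
    master_summable hq1' hs hδ0
  have hB1 : Summable (fun N : ℕ => 2 * (1 + ‖b‖) ^ ((N+1) + 3) * ‖q‖ ^ ((N+1) * ((N+1) / s)) / δ) :=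
    (summable_nat_add_iff 1).mpr hB
  set CB : ℝ := ∑' N : ℕ, 2 * (1 + ‖b‖) ^ ((N+1) + 3) * ‖q‖ ^ ((N+1) * ((N+1) / s)) / δ with hCB
  -- tail summability and bounds
  have hbnd : ∀ j N : ℕ, ‖trm s (m+j) q b (N+1)‖
      ≤ ‖q‖ ^ j * (2 * (1 + ‖b‖) ^ ((N+1) + 3) * ‖q‖ ^ ((N+1) * ((N+1) / s)) / δ) :=
    fun j N => bnd_trm hq1' hδ0 hD j (N+1) (Or.inr (by omega))
  have htail : ∀ j, Summable (fun N => trm s (m+j) q b (N+1)) := by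
    intro j
    apply Summable.of_norm_bounded (hB1.mul_left (‖q‖ ^ j)) (hbnd j)
  have htrmsum : ∀ j, Summable (trm s (m+j) q b) :=
    fun j => (summable_nat_add_iff 1).mp (htail j)
  set G : ℕ → ℂ := fun j => ∑' N, trm s (m+j) q b N with hG
  have hG0val : ∀ j, trm s (m+j) q b 0 = 1 := by
    intro j
    simp [trm, cc, qPoch]
  have hGsplit : ∀ j, G j = 1 + ∑' N, trm s (m+j) q b (N+1) := by
    intro j
    rw [hG]
    simp only
    rw [Summable.tsum_eq_zero_add (htrmsum j), hG0val j]
  have hGdiff : ∀ j, ‖G j - 1‖ ≤ CB * ‖q‖ ^ j := by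
    intro j
    rw [hGsplit j]
    simp only [add_sub_cancel_left]
    have hnorm : Summable (fun N => ‖trm s (m+j) q b (N+1)‖) :=
      Summable.of_nonneg_of_le (fun N => norm_nonneg _) (hbnd j) (hB1.mul_left (‖q‖ ^ j))
    calc ‖∑' N, trm s (m+j) q b (N+1)‖ ≤ ∑' N, ‖trm s (m+j) q b (N+1)‖ :=
          norm_tsum_le_tsum_norm hnorm
      _ ≤ ∑' N, ‖q‖ ^ j * (2 * (1 + ‖b‖) ^ ((N+1) + 3) * ‖q‖ ^ ((N+1) * ((N+1) / s)) / δ) :=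
          Summable.tsum_le_tsum (hbnd j) hnorm (hB1.mul_left _)
      _ = ‖q‖ ^ j * CB := by rw [tsum_mul_left, hCB]
      _ = CB * ‖q‖ ^ j := by ring
  have hGtends : Tendsto G atTop (nhds 1) := by
    have h0 : Tendsto (fun j => G j - 1) atTop (nhds 0) := by
      apply squeeze_zero_norm hGdiff
      simpa using (tendsto_pow_atTop_nhds_zero_of_lt_one (norm_nonneg q) hq1').const_mul CB
    have := h0.add_const 1
    simp only [sub_add_cancel, zero_add] at this
    exact this
  have hind : ∀ j, qPoch (b * q ^ (m+1)) q j * G 0 = G j := by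
    intro j
    induction j with
    | zero => simp [qPoch]
    | succ j ih =>
      rw [qPoch_succ]
      have harg : b * q ^ (m+1) * q ^ j = b * q ^ (m+j+1) := by
        rw [mul_assoc, ← pow_add, show m+1+j = m+j+1 by omega]
      calc qPoch (b * q ^ (m+1)) q j * (1 - b * q ^ (m+1) * q ^ j) * G 0
          = (1 - b * q ^ (m+j+1)) * (qPoch (b * q ^ (m+1)) q j * G 0) := by rw [harg]; ring
        _ = (1 - b * q ^ (m+j+1)) * G j := by rw [ih]
        _ = G (j+1) := step hs hq1' hb (m+j)
  have hfn : ∀ i : ℕ, (1:ℂ) - b * q ^ (m+1) * q ^ i ≠ 0 := by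
    intro i
    rw [mul_assoc, ← pow_add, show m+1+i = (m+i)+1 by omega]
    exact hb (m+i)
  have hlog : Summable (fun i : ℕ => Complex.log (1 - b * q ^ (m+1) * q ^ i)) := by
    apply Summable.of_norm_bounded_eventually
      (g := fun i => 3/2 * (‖b * q ^ (m+1)‖ * ‖q‖ ^ i))
      (((summable_geometric_of_lt_one (norm_nonneg q) hq1').mul_left _).mul_left _)
    rw [Nat.cofinite_eq_atTop]
    have hev : ∀ᶠ i : ℕ in atTop, ‖b * q ^ (m+1)‖ * ‖q‖ ^ i ≤ 1/2 := by
      apply Tendsto.eventually_le_const (show (0:ℝ) < 1/2 by norm_num)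
      simpa using (tendsto_pow_atTop_nhds_zero_of_lt_one (norm_nonneg q) hq1').const_mul
        (‖b * q ^ (m+1)‖)
    filter_upwards [hev] with i hi
    have hz : ‖-(b * q ^ (m+1) * q ^ i)‖ ≤ 1/2 := by
      rw [norm_neg, norm_mul, norm_pow]
      exact hi
    have hlb := Complex.norm_log_one_add_half_le_self hz
    rw [← sub_eq_add_neg] at hlb
    rw [norm_neg, norm_mul, norm_pow] at hlb
    exact hlb
  have hmult : Multipliable (fun i : ℕ => 1 - b * q ^ (m+1) * q ^ i) := by
    have := Complex.multipliable_of_summable_log hlog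
    exact this
  have hprod : Tendsto (fun j => qPoch (b * q ^ (m+1)) q j) atTop
      (nhds (qPochInf (b * q ^ (m+1)) q)) := by
    have := hmult.hasProd.tendsto_prod_nat
    exact this
  have hQG : qPochInf (b * q ^ (m+1)) q * G 0 = 1 := by
    apply tendsto_nhds_unique (f := fun j => qPoch (b * q ^ (m+1)) q j * G 0) (l := atTop)
    · exact hprod.mul_const (G 0)
    · exact hGtends.congr (fun j => (hind j).symm)
  have hfinal : G 0 = 1 / qPochInf (b * q ^ (m+1)) q :=
    eq_one_div_of_mul_eq_one_right hQG
  -- reindexing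
  haveI : NeZero s := ⟨hs.ne'⟩
  set Φ : Fin s × ℕ ≃ ℕ := (Equiv.prodComm (Fin s) ℕ).trans (Nat.divModEquiv s).symm with hΦdef
  have hΦap : ∀ (k : Fin s) (n : ℕ), Φ (k, n) = n * s + ↑k := by
    intro k n
    simp [hΦdef, Nat.divModEquiv]
  have hsum0 : Summable (trm s m q b) := htrmsum 0
  have hΦsum : Summable (fun p : Fin s × ℕ => trm s m q b (Φ p)) :=
    Φ.summable_iff.mpr hsum0
  calc ∑ k ∈ Finset.range s, ∑' n : ℕ,
        b ^ (s * n + k) * q ^ ((s * n + k) * (m + n + if k = 0 then 0 else 1)) /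
          (qPoch (b * q ^ (m + 1)) q n * qPoch q q (s * n + k))
      = ∑ k : Fin s, ∑' n : ℕ,
        b ^ (s * n + ↑k) * q ^ ((s * n + ↑k) * (m + n + if (k:ℕ) = 0 then 0 else 1)) /
          (qPoch (b * q ^ (m + 1)) q n * qPoch q q (s * n + ↑k)) :=
        (Fin.sum_univ_eq_sum_range _ s).symm
    _ = ∑ k : Fin s, ∑' n : ℕ, trm s m q b (Φ (k, n)) := by
        apply Finset.sum_congr rfl
        intro k _
        apply tsum_congr
        intro n
        rw [hΦap k n, reindex_term hs k.isLt n]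
    _ = ∑' k : Fin s, ∑' n : ℕ, trm s m q b (Φ (k, n)) := (tsum_fintype _).symm
    _ = ∑' p : Fin s × ℕ, trm s m q b (Φ p) := (Summable.tsum_prod' hΦsum (fun k => hΦsum.prod_factor k)).symm
    _ = ∑' N, trm s m q b N := Φ.tsum_eq _
    _ = G 0 := rfl
    _ = 1 / qPochInf (b * q ^ (m + 1)) q := hfinal
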